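/- (Remark) Let H ∈ ℂ^{M×K} have columns h_1, …, h_K. Define F_0 = 0 ∈ ℂ^{M×K} and, for n ≥ 1, F_n = F_{n-1} + W_n · diag(a_n), where each W_n ∈ ℂ^{M×K} is the zero-padded zero-forcing extra beamformer built from some index set I_n ⊆ {1,…,M} for which H_{(I_n,:)} has full column rank K, and each a_n ∈ ℂ^K satisfies, for every k: (a_n)_k ≠ 0 and conj(h_k^H (F_{n-1})_{(:,k)}) · (a_n)_k is a nonnegative real number. Then for every n ≥ 1 and every k ≠ ℓ, h_k^H (F_n)_{(:,ℓ)} = 0 (each F_n is a zero-interference beamformer), and for every k the beamforming gain |h_k^H (F_n)_{(:,k)}|² is strictly increasing in n. -/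

import Mathlib

open Matrix

/-- The row-restriction of `H` to the rows indexed by the finite set `I`. -/
def rowRestrict {M K : ℕ} (H : Matrix (Fin M) (Fin K) ℂ) (I : Finset (Fin M)) :
    Matrix ↥I (Fin K) ℂ := fun i k => H i.1 k

/-- The zero-padded zero-forcing extra beamformer built from `H` and the antenna set `I`. -/
noncomputable def zfPad {M K : ℕ} (H : Matrix (Fin M) (Fin K) ℂ) (I : Finset (Fin M)) :
    Matrix (Fin M) (Fin K) ℂ := fun m k =>
  if h : m ∈ I then
    (rowRestrict H I * ((rowRestrict H I)ᴴ * rowRestrict H I)⁻¹) ⟨m, h⟩ k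
  else 0

/-! Since `Ĥᴴ Ŵ = 1` and the padded rows of `W` are zero, `Hᴴ W_n = 1`, so each iteration adds
`diag(a_n)` to the effective channel `Hᴴ F_n`, which therefore stays diagonal. On the diagonal the
gain `g = h_kᴴ f_k` moves to `g + a` with `conj(g) a ≥ 0` and `a ≠ 0`, hence
`|g + a|² = |g|² + 2 conj(g) a + |a|² > |g|²`. -/

theorem Matrix.isUnit_of_rank_eq_card {n K : Type*} [Fintype n] [DecidableEq n] [Field K]
    {A : Matrix n n K} (h : A.rank = Fintype.card n) : IsUnit A := by
  rw [← mulVec_surjective_iff_isUnit]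
  refine LinearMap.range_eq_top.mp <|
    Submodule.eq_top_of_finrank_eq (S := LinearMap.range A.mulVecLin) ?_
  rw [Module.finrank_fintype_fun_eq_card, ← h]
  rfl

theorem Matrix.conjTranspose_mul_mul_inv_conjTranspose_mul_self {m n 𝕜 : Type*} [Fintype m]
    [Fintype n] [DecidableEq n] [RCLike 𝕜] {B : Matrix m n 𝕜} (h : B.rank = Fintype.card n) :
    Bᴴ * (B * (Bᴴ * B)⁻¹) = 1 := by
  have hB : IsUnit (Bᴴ * B) := isUnit_of_rank_eq_card <| by
    open scoped ComplexOrder in rw [rank_conjTranspose_mul_self, h]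
  rw [← Matrix.mul_assoc, mul_nonsing_inv _ ((isUnit_iff_isUnit_det _).mp hB)]

theorem conjTranspose_mul_eq_rowRestrict_mul {M K L : ℕ}
    (H : Matrix (Fin M) (Fin K) ℂ) (P : Matrix (Fin M) (Fin L) ℂ) (I : Finset (Fin M))
    (hP : ∀ m ∉ I, ∀ k, P m k = 0) :
    Hᴴ * P = (rowRestrict H I)ᴴ * rowRestrict P I := by
  ext k l
  simp only [mul_apply, conjTranspose_apply, rowRestrict]
  rw [Finset.sum_coe_sort I fun m => star (H m k) * P m l]
  exact (Finset.sum_subset (Finset.subset_univ I) fun m _ hm => by simp [hP m hm]).symm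

theorem rowRestrict_zfPad {M K : ℕ} (H : Matrix (Fin M) (Fin K) ℂ) (I : Finset (Fin M)) :
    rowRestrict (zfPad H I) I =
      rowRestrict H I * ((rowRestrict H I)ᴴ * rowRestrict H I)⁻¹ := by
  ext i k
  simp [rowRestrict, zfPad, i.2]

theorem conjTranspose_mul_zfPad {M K : ℕ} (H : Matrix (Fin M) (Fin K) ℂ) (I : Finset (Fin M))
    (h : (rowRestrict H I).rank = K) : Hᴴ * zfPad H I = 1 := by
  rw [conjTranspose_mul_eq_rowRestrict_mul H _ I (fun m hm k => by simp [zfPad, hm]),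
    rowRestrict_zfPad]
  exact conjTranspose_mul_mul_inv_conjTranspose_mul_self (by rw [h, Fintype.card_fin])

theorem norm_sq_lt_norm_add_sq {𝕜 E : Type*} [RCLike 𝕜] [NormedAddCommGroup E]
    [InnerProductSpace 𝕜 E] {x y : E} (hxy : 0 ≤ RCLike.re (inner 𝕜 x y)) (hy : y ≠ 0) :
    ‖x‖ ^ 2 < ‖x + y‖ ^ 2 := by
  rw [norm_add_sq (𝕜 := 𝕜)]
  have : 0 < ‖y‖ ^ 2 := by positivity
  linarith

theorem cpr_iterates_zero_interference_and_strictMono_gain_general {M K : ℕ}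
    (H : Matrix (Fin M) (Fin K) ℂ)
    (F : ℕ → Matrix (Fin M) (Fin K) ℂ)
    (I : ℕ → Finset (Fin M))
    (a : ℕ → Fin K → ℂ)
    (hF0 : F 0 = 0)
    (hrank : ∀ n : ℕ, (rowRestrict H (I (n + 1))).rank = K)
    (hrec : ∀ n : ℕ, F (n + 1) = F n + zfPad H (I (n + 1)) * Matrix.diagonal (a (n + 1)))
    (ha0 : ∀ n : ℕ, ∀ k, a (n + 1) k ≠ 0)
    (halign : ∀ n : ℕ, ∀ k, ∃ r : ℝ, 0 ≤ r ∧
      star ((Hᴴ * F n) k k) * a (n + 1) k = (r : ℂ)) :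
    (∀ n : ℕ, 1 ≤ n → ∀ k ℓ, k ≠ ℓ → (Hᴴ * F n) k ℓ = 0) ∧
      ∀ k, StrictMono (fun n : ℕ => ‖(Hᴴ * F n) k k‖ ^ 2) := by
  have hstep : ∀ n, Hᴴ * F (n + 1) = Hᴴ * F n + diagonal (a (n + 1)) := fun n => by
    rw [hrec n, Matrix.mul_add, ← Matrix.mul_assoc, conjTranspose_mul_zfPad H _ (hrank n),
      Matrix.one_mul]
  have hdiag : ∀ n, (Hᴴ * F n).IsDiag := by
    intro n
    induction n with
    | zero => simp [hF0, isDiag_zero]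
    | succ n ih => exact hstep n ▸ ih.add (isDiag_diagonal _)
  refine ⟨fun n _ k ℓ hkℓ => hdiag n hkℓ, fun k => strictMono_nat_of_lt_succ fun n => ?_⟩
  obtain ⟨r, hr, hra⟩ := halign n k
  rw [hstep n, Matrix.add_apply, diagonal_apply_eq]
  refine norm_sq_lt_norm_add_sq (𝕜 := ℂ) ?_ (ha0 n k)
  rw [RCLike.inner_apply, mul_comm, ← Complex.star_def, hra]
  exact_mod_cast hr

/-- Remark: starting from the all-zero beamformer, every CPR iterate is a zero-interference
(zero-forcing) beamformer, and the beamforming gain of every UE is strictly increasing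
along the iterations. -/
theorem cpr_iterates_zero_interference_and_strictMono_gain {M K : ℕ}
    (hK : 0 < K) (hKM : K ≤ M)
    (H : Matrix (Fin M) (Fin K) ℂ)
    (F : ℕ → Matrix (Fin M) (Fin K) ℂ)
    (I : ℕ → Finset (Fin M))
    (a : ℕ → Fin K → ℂ)
    (hF0 : F 0 = 0)
    (hrank : ∀ n : ℕ, (rowRestrict H (I (n + 1))).rank = K)
    (hrec : ∀ n : ℕ, F (n + 1) = F n + zfPad H (I (n + 1)) * Matrix.diagonal (a (n + 1)))
    (ha0 : ∀ n : ℕ, ∀ k, a (n + 1) k ≠ 0)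
    (halign : ∀ n : ℕ, ∀ k, ∃ r : ℝ, 0 ≤ r ∧
      star ((Hᴴ * F n) k k) * a (n + 1) k = (r : ℂ)) :
    (∀ n : ℕ, 1 ≤ n → ∀ k ℓ, k ≠ ℓ → (Hᴴ * F n) k ℓ = 0) ∧
      ∀ k, StrictMono (fun n : ℕ => ‖(Hᴴ * F n) k k‖ ^ 2) :=
  cpr_iterates_zero_interference_and_strictMono_gain_general H F I a hF0 hrank hrec ha0 halign
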